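/- For integers 1 ≤ j ≤ k with k ≥ 2 and k + j even, letting f = WMON_{k,j}, the Chow parameter of the president satisfies f̂({1}) = 2^{−k}·(2^{k−1} − 2·Σ_{i=0}^{(k−j)/2 − 1} C(k−1, i)). -/

import Mathlib

/-- sign(z) = 1 if z > 0 and 0 otherwise. -/
noncomputable def Rsign (z : ℝ) : ℝ := if 0 < z then 1 else 0

/-- Encoding of {-1,1}: `true ↦ 1`, `false ↦ -1`. -/
def pm (b : Bool) : ℝ := if b then 1 else -1

/-- The weak monarchy function WMON_{k,j}(x) = sign(j·x_1 + x_2 + ⋯ + x_k). -/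
noncomputable def WMON (k j : ℕ) (x : Fin k → Bool) : ℝ :=
  Rsign (∑ i : Fin k, (if (i : ℕ) = 0 then (j : ℝ) else 1) * pm (x i))

/-- The Chow parameter (degree-1 Fourier coefficient) f̂({i}) = 2^{-k}·Σ_x f(x)·x_i. -/
noncomputable def chow (k : ℕ) (f : (Fin k → Bool) → ℝ) (i : Fin k) : ℝ :=
  (∑ x, f x * pm (x i)) / 2 ^ k

/-! Splitting on the president's vote x₁ = ±1, the Chow parameter is 2⁻ᵏ times the number of
y ∈ {−1,1}^{k−1} with |y₁ + ⋯ + y_{k−1}| < j. Writing k − j = 2c, these are exactly the y with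
between c and c + j − 1 ones, so the count is 2^{k−1} minus the two tails of the binomial
distribution, which agree by the symmetry C(k−1, t) = C(k−1, k−1−t). -/

open Finset

section BooleanCube

variable {α : Type*} [Fintype α]

theorem sum_fun_bool_apply_card [DecidableEq α] {M : Type*} [AddCommMonoid M] (g : ℕ → M) :
    ∑ y : α → Bool, g #{i | y i} =
      ∑ t ∈ range (Fintype.card α + 1), (Fintype.card α).choose t • g t := by
  rw [← card_univ, ← sum_powerset_apply_card, powerset_univ]
  let e : (α → Bool) ≃ Finset α :=
    { toFun y := {i | y i}, invFun s i := i ∈ s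
      left_inv y := by ext; simp, right_inv s := by ext; simp }
  exact Fintype.sum_equiv e _ _ fun _ ↦ rfl

theorem sum_pm_eq_two_mul_card_sub (y : α → Bool) : ∑ i, pm (y i) = 2 * #{i | y i} - Fintype.card α := by
  have hpm : ∀ b, pm b = 2 * (if b then 1 else 0) - 1 := by
    rintro (_ | _) <;> norm_num [pm]
  simp only [hpm, sum_sub_distrib, ← mul_sum, sum_boole, sum_const, card_univ]
  simp

theorem sum_fun_bool_comp_sum_pm [DecidableEq α] (g : ℝ → ℝ) :
    ∑ y : α → Bool, g (∑ i, pm (y i)) =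
      ∑ t ∈ range (Fintype.card α + 1), (Fintype.card α).choose t * g (2 * t - Fintype.card α) := by
  simp only [sum_pm_eq_two_mul_card_sub, sum_fun_bool_apply_card (fun t : ℕ ↦ g (2 * t - Fintype.card α)),
    nsmul_eq_mul]

end BooleanCube

theorem Nat.sum_Ico_choose_add_two_mul_sum_range_choose {n c : ℕ} (h : 2 * c ≤ n + 1) :
    ∑ t ∈ Ico c (n + 1 - c), n.choose t + 2 * ∑ t ∈ range c, n.choose t = 2 ^ n := by
  have htail : ∑ t ∈ Ico (n + 1 - c) (n + 1), n.choose t = ∑ t ∈ range c, n.choose t := by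
    have hreflect := sum_Ico_reflect n.choose 0 (by omega : c ≤ n + 1)
    rw [Nat.sub_zero] at hreflect
    rw [← hreflect, range_eq_Ico]
    refine sum_congr rfl fun t ht ↦ Nat.choose_symm ?_
    grind
  rw [← Nat.sum_range_choose, ← sum_range_add_sum_Ico _ (by omega : n + 1 - c ≤ n + 1),
    ← sum_range_add_sum_Ico _ (by omega : c ≤ n + 1 - c), htail]
  ring

theorem WMON_cons (n j : ℕ) (b : Bool) (y : Fin n → Bool) :
    WMON (n + 1) j (Fin.cons b y) = Rsign (j * pm b + ∑ i, pm (y i)) := by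
  simp [WMON, Fin.sum_univ_succ]

theorem sum_WMON_mul_pm_zero (n j : ℕ) :
    ∑ x, WMON (n + 1) j x * pm (x 0) =
      ∑ y : Fin n → Bool, (Rsign (j + ∑ i, pm (y i)) - Rsign (-j + ∑ i, pm (y i))) := by
  rw [sum_sub_distrib, ← (Fin.consEquiv _).sum_comp, Fintype.sum_prod_type, Fintype.sum_bool]
  simp [Fin.consEquiv, WMON_cons, pm, sub_eq_add_neg]

theorem Rsign_sub_Rsign_eq_ite {n j c t : ℕ} (h : n + 1 = j + 2 * c) :
    Rsign (j + (2 * t - n)) - Rsign (-j + (2 * t - n)) = if t ∈ Ico c (c + j) then 1 else 0 := by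
  have hlow : (0 : ℝ) < j + (2 * t - n) ↔ c ≤ t := by
    rw [show (j : ℝ) + (2 * t - n) = (j + 2 * t : ℕ) - n by push_cast; ring, sub_pos,
      Nat.cast_lt]
    omega
  have hhigh : (0 : ℝ) < -j + (2 * t - n) ↔ c + j ≤ t := by
    rw [show (-j : ℝ) + (2 * t - n) = (2 * t : ℕ) - (n + j : ℕ) by push_cast; ring,
      sub_pos, Nat.cast_lt]
    omega
  simp only [Rsign, hlow, hhigh, mem_Ico]
  split_ifs <;> (try norm_num) <;> omega

theorem stmt_10 (j k : ℕ) (hjk : j ≤ k) (hk : 2 ≤ k)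
    (he : Even (k + j)) :
    chow k (WMON k j) ⟨0, by omega⟩
      = ((2 : ℝ) ^ (k - 1)
          - 2 * (∑ i ∈ Finset.range ((k - j) / 2), (Nat.choose (k - 1) i : ℝ))) / 2 ^ k := by
  obtain ⟨n, rfl⟩ : ∃ n, k = n + 1 := ⟨k - 1, by omega⟩
  obtain ⟨c, hc⟩ : ∃ c, n + 1 = j + 2 * c := ⟨(n + 1 - j) / 2, by grind⟩
  rw [chow, Fin.mk_zero', show (n + 1 - j) / 2 = c by omega, Nat.add_sub_cancel,
    sum_WMON_mul_pm_zero, sum_fun_bool_comp_sum_pm (fun s ↦ Rsign (j + s) - Rsign (-j + s))]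
  simp only [Fintype.card_fin, Rsign_sub_Rsign_eq_ite hc, mul_ite, mul_one, mul_zero,
    sum_ite_mem]
  have hcount : ∑ t ∈ Ico c (n + 1 - c), (n.choose t : ℝ) + 2 * ∑ t ∈ range c, (n.choose t : ℝ)
      = 2 ^ n := by
    exact_mod_cast Nat.sum_Ico_choose_add_two_mul_sum_range_choose (by omega)
  rw [inter_eq_right.mpr (fun t ht ↦ by grind), show c + j = n + 1 - c by omega,
    ← hcount]
  ring
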